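/- arXiv:2503.16697 — 2 statements merged into one kernel-verified Lean document; each statement's English description precedes it below -/
import Mathlib

section
/- Let k be a field of prime characteristic p, let P be a finite p-group, and let E be a finite group of order prime to p acting on P by automorphisms such that [P,E] = P. Then every E-stable derivation f : kP → kP has image contained in the Jacobson radical J(kP). -/
namespace HHPaper

open MonoidAlgebra

attribute [local instance 100] LieRing.ofAssociativeRing

section Derivations

variable {k A : Type*} [CommRing k] [Ring A] [Algebra k A]

/-- `f` is a derivation on the associative unital `k`-algebra `A`. -/
def IsDerivation (f : Module.End k A) : Prop :=
  ∀ a b : A, f (a * b) = f a * b + a * f b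

lemma IsDerivation.add {f g : Module.End k A} (hf : IsDerivation f) (hg : IsDerivation g) :
    IsDerivation (f + g) := by
  intro a b
  simp only [LinearMap.add_apply, hf a b, hg a b, add_mul, mul_add]
  abel

lemma IsDerivation.zero : IsDerivation (0 : Module.End k A) := by
  intro a b; simp

lemma IsDerivation.smul (c : k) {f : Module.End k A} (hf : IsDerivation f) :
    IsDerivation (c • f) := by
  intro a b
  simp only [LinearMap.smul_apply, hf a b, smul_add, smul_mul_assoc, mul_smul_comm]

lemma IsDerivation.lie {f g : Module.End k A} (hf : IsDerivation f) (hg : IsDerivation g) :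
    IsDerivation ⁅f, g⁆ := by
  intro a b
  simp only [Ring.lie_def, LinearMap.sub_apply, Module.End.mul_apply]
  rw [hg a b, hf a b, map_add, map_add, hf (g a) b, hf a (g b), hg (f a) b, hg a (f b)]
  simp only [sub_mul, mul_sub, add_mul, mul_add]
  abel

variable (k A) in
/-- The Lie algebra of derivations on `A`, as a Lie subalgebra of `Module.End k A`. -/
def derivLie : LieSubalgebra k (Module.End k A) where
  carrier := {f | IsDerivation f}
  add_mem' := fun hf hg => hf.add hg
  zero_mem' := IsDerivation.zero
  smul_mem' := fun c _ hf => hf.smul c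
  lie_mem' := fun hf hg => hf.lie hg

@[simp] lemma mem_derivLie {f : Module.End k A} :
    f ∈ derivLie k A ↔ IsDerivation f := Iff.rfl

variable (k) in
/-- The inner derivation `[c, -]` associated with `c : A`. -/
def innerDeriv (c : A) : Module.End k A :=
  LinearMap.mulLeft k c - LinearMap.mulRight k c

@[simp] lemma innerDeriv_apply (c a : A) : innerDeriv k c a = c * a - a * c := rfl

lemma innerDeriv_isDerivation (c : A) : IsDerivation (innerDeriv k c) := by
  intro a b
  simp only [innerDeriv_apply, sub_mul, mul_sub, mul_assoc]
  abel

lemma innerDeriv_add (c d : A) :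
    innerDeriv k (c + d) = innerDeriv k c + innerDeriv k d := by
  ext a; simp only [innerDeriv_apply, LinearMap.add_apply, add_mul, mul_add]; abel

lemma innerDeriv_smul (s : k) (c : A) :
    innerDeriv k (s • c) = s • innerDeriv k c := by
  ext a
  simp only [innerDeriv_apply, LinearMap.smul_apply, smul_sub, smul_mul_assoc, mul_smul_comm]

lemma innerDeriv_zero : innerDeriv k (0 : A) = 0 := by
  ext a; simp

variable (k A) in
/-- The Lie ideal of inner derivations inside the Lie algebra of derivations. -/
def innerIdeal : LieIdeal k (derivLie k A) where
  carrier := {f | ∃ c : A, (f : Module.End k A) = innerDeriv k c}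
  add_mem' := by
    rintro f g ⟨c, hc⟩ ⟨d, hd⟩
    exact ⟨c + d, by simp [innerDeriv_add, hc, hd]⟩
  zero_mem' := ⟨0, by simp [innerDeriv_zero]⟩
  smul_mem' := by
    rintro s f ⟨c, hc⟩
    exact ⟨s • c, by rw [innerDeriv_smul]; rw [← hc]; rfl⟩
  lie_mem := by
    rintro x m ⟨c, hc⟩
    refine ⟨(x : Module.End k A) c, ?_⟩
    have hx : IsDerivation (x : Module.End k A) := x.2
    ext a
    have hb : ((⁅x, m⁆ : derivLie k A) : Module.End k A) =
        ⁅(x : Module.End k A), (m : Module.End k A)⁆ := rfl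
    rw [hb, hc]
    simp only [Ring.lie_def, LinearMap.sub_apply, Module.End.mul_apply, innerDeriv_apply,
      map_sub, hx c a, hx a c]
    abel

variable (k A) in
/-- First Hochschild cohomology of `A`, as the quotient Lie algebra of derivations
modulo inner derivations. -/
abbrev HH1 := (derivLie k A) ⧸ (innerIdeal k A)

variable (k A) in
/-- The Jacobson radical of `A`, regarded as a `k`-subspace of `A`. -/
def jacRad : Submodule k A :=
  Submodule.restrictScalars k (Ideal.jacobson (⊥ : Ideal A))

variable (k A) in
/-- The Lie subalgebra of derivations with image contained in the `m`-th power of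
the Jacobson radical. -/
def derivRadLie (m : ℕ) : LieSubalgebra k (Module.End k A) where
  carrier := {f | IsDerivation f ∧ LinearMap.range f ≤ (jacRad k A) ^ m}
  add_mem' := by
    rintro f g ⟨hf, hf'⟩ ⟨hg, hg'⟩
    refine ⟨hf.add hg, ?_⟩
    rintro x ⟨a, rfl⟩
    exact add_mem (hf' ⟨a, rfl⟩) (hg' ⟨a, rfl⟩)
  zero_mem' := ⟨IsDerivation.zero, by rintro x ⟨a, rfl⟩; simp⟩
  smul_mem' := by
    rintro s f ⟨hf, hf'⟩
    refine ⟨hf.smul s, ?_⟩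
    rintro x ⟨a, rfl⟩
    exact Submodule.smul_mem _ s (hf' ⟨a, rfl⟩)
  lie_mem' := by
    rintro f g ⟨hf, hf'⟩ ⟨hg, hg'⟩
    refine ⟨hf.lie hg, ?_⟩
    rintro x ⟨a, rfl⟩
    have : ⁅f, g⁆ a = f (g a) - g (f a) := by
      simp [Ring.lie_def, Module.End.mul_apply]
    rw [this]
    exact sub_mem (hf' ⟨g a, rfl⟩) (hg' ⟨f a, rfl⟩)

@[simp] lemma mem_derivRadLie {m : ℕ} {f : Module.End k A} :
    f ∈ derivRadLie k A m ↔ IsDerivation f ∧ LinearMap.range f ≤ (jacRad k A) ^ m := Iff.rfl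

variable (k A) in
/-- The Loewy length of `A`: the least positive `n` with `J(A)^n = 0`. -/
noncomputable def loewyLength : ℕ :=
  sInf {n : ℕ | 0 < n ∧ (jacRad k A) ^ n = ⊥}

/-- A semisimple-style multiplicity freeness: any two isomorphic simple submodules
coincide. -/
def IsMultiplicityFree (R M : Type*) [Ring R] [AddCommGroup M] [Module R M] : Prop :=
  ∀ S T : Submodule R M, IsSimpleModule R S → IsSimpleModule R T →
    Nonempty (S ≃ₗ[R] T) → S = T

end Derivations


section GroupAlgebra

open MonoidAlgebra

variable (k : Type*) [CommRing k] {P E : Type*} [Group P] [Group E]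

/-- The subgroup `[P,E]` generated by the elements `(ᵉu)u⁻¹`. -/
def commSubgroupE (φ : E →* MulAut P) : Subgroup P :=
  Subgroup.closure {x : P | ∃ (e : E) (u : P), x = φ e u * u⁻¹}

/-- A linear endomorphism of `kP` is `E`-stable if it commutes with the `E`-action. -/
def IsEStable (φ : E →* MulAut P) (f : Module.End k (MonoidAlgebra k P)) : Prop :=
  ∀ (e : E) (a : MonoidAlgebra k P),
    f (MonoidAlgebra.domCongr k k (φ e) a) = MonoidAlgebra.domCongr k k (φ e) (f a)

/-- The Lie algebra `Der(kP)^E` of `E`-stable derivations on the group algebra `kP`. -/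
def eStableDerivLie (φ : E →* MulAut P) :
    LieSubalgebra k (Module.End k (MonoidAlgebra k P)) where
  carrier := {f | IsDerivation f ∧ IsEStable k φ f}
  add_mem' := by
    rintro f g ⟨hf, hf'⟩ ⟨hg, hg'⟩
    exact ⟨hf.add hg, fun e a => by simp [LinearMap.add_apply, hf' e a, hg' e a]⟩
  zero_mem' := ⟨IsDerivation.zero, fun e a => by simp⟩
  smul_mem' := by
    rintro s f ⟨hf, hf'⟩
    refine ⟨hf.smul s, fun e a => ?_⟩
    simp only [LinearMap.smul_apply, hf' e a, map_smul]
  lie_mem' := by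
    rintro f g ⟨hf, hf'⟩ ⟨hg, hg'⟩
    refine ⟨hf.lie hg, fun e a => ?_⟩
    simp only [Ring.lie_def, LinearMap.sub_apply, Module.End.mul_apply, hf' e, hg' e, map_sub]

@[simp] lemma mem_eStableDerivLie {φ : E →* MulAut P} {f : Module.End k (MonoidAlgebra k P)} :
    f ∈ eStableDerivLie k φ ↔ IsDerivation f ∧ IsEStable k φ f := Iff.rfl

end GroupAlgebra

section Commutant

variable (k : Type*) [CommRing k] {Q : Type*} [AddCommGroup Q] [Module k Q]
  {E : Type*} [Group E]

/-- The Lie subalgebra of `Module.End k Q` of endomorphisms commuting with a given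
`E`-action, i.e. `End_{kE}(Q)`. -/
def commutantLie (ρ : E →* (Q ≃ₗ[k] Q)) : LieSubalgebra k (Module.End k Q) where
  carrier := {g | ∀ (e : E) (x : Q), g (ρ e x) = ρ e (g x)}
  add_mem' := by
    intro f g hf hg e x
    simp [LinearMap.add_apply, hf e x, hg e x]
  zero_mem' := by intro e x; simp
  smul_mem' := by
    intro s f hf e x
    simp [LinearMap.smul_apply, hf e x]
  lie_mem' := by
    intro f g hf hg e x
    simp only [Ring.lie_def, LinearMap.sub_apply, Module.End.mul_apply, hf e, hg e, map_sub]

end Commutant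

end HHPaper

/-!
Let `ε : kP → k` be the augmentation. For a derivation `f`, the map `u ↦ ε (f u)` is a
homomorphism `P → (k, +)` because `ε u = 1`; `E`-stability of `f` makes it `E`-invariant,
so it kills the generators `(ᵉu)u⁻¹` of `[P,E] = P`. Hence `ε ∘ f = 0`, and the augmentation
ideal lies in `J(kP)` because a finite `p`-group fixes a nonzero vector of every module in
characteristic `p`, so it acts trivially on every simple `kP`-module.
-/

theorem IsPGroup.exists_fixed_ne_zero {p : ℕ} [hp : Fact p.Prime] {G V : Type*} [Group G]
    [Finite G] [AddCommGroup V] [Nontrivial V] [DistribMulAction G V] (hG : IsPGroup p G)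
    (hV : ∀ v : V, p • v = 0) : ∃ v : V, v ≠ 0 ∧ ∀ g : G, g • v = v := by
  obtain ⟨v₀, hv₀⟩ := exists_ne (0 : V)
  -- a finite `G`-set of order divisible by `p` fixing `0`, hence with a second fixed point
  let W := AddSubgroup.closure (Set.range fun g : G => g • v₀)
  have hv₀W : v₀ ∈ W := AddSubgroup.subset_closure ⟨1, one_smul G v₀⟩
  have hW : ∀ g : G, ∀ w ∈ W, g • w ∈ W := by
    intro g w hw
    induction hw using AddSubgroup.closure_induction with
    | mem _ h =>
      obtain ⟨h, rfl⟩ := h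
      exact AddSubgroup.subset_closure ⟨g * h, mul_smul g h v₀⟩
    | zero => rw [smul_zero]; exact W.zero_mem
    | add _ _ _ _ h₁ h₂ => rw [smul_add]; exact W.add_mem h₁ h₂
    | neg _ _ h => rw [smul_neg]; exact W.neg_mem h
  have : Finite W := AddCommGroup.finite_of_fg_isAddTorsion W fun w =>
    isOfFinAddOrder_iff_nsmul_eq_zero.2 ⟨p, hp.out.pos, Subtype.ext (hV w)⟩
  let S : SubMulAction G V := ⟨W, fun g _ hw => hW g _ hw⟩
  have hpS : p ∣ Nat.card S :=
    addOrderOf_eq_prime (hV v₀) hv₀ ▸ W.addOrderOf_dvd_natCard hv₀W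
  obtain ⟨v, hv, hne⟩ := hG.exists_fixed_point_of_prime_dvd_card_of_fixed_point S hpS
    (a := ⟨0, W.zero_mem⟩) fun g => Subtype.ext (smul_zero g)
  exact ⟨v, fun h => hne (Subtype.ext h.symm), fun g => congrArg Subtype.val (hv g)⟩

namespace MonoidAlgebra

section Invariants

variable {k G V : Type*} [CommSemiring k] [Monoid G] [AddCommMonoid V]
  [Module (MonoidAlgebra k G) V]

theorem smul_eq_counit_smul_of_forall_of_smul_eq {v : V} (hv : ∀ g, of k G g • v = v)
    (x : MonoidAlgebra k G) :
    x • v = algebraMap k (MonoidAlgebra k G) (Coalgebra.counit x) • v := by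
  induction x using MonoidAlgebra.induction_on with
  | of g =>
    have : Coalgebra.counit (R := k) (of k G g) = 1 := by simp
    rw [this, map_one, one_smul, hv g]
  | add x y hx hy => rw [add_smul, hx, hy, map_add, map_add, add_smul]
  | smul r x hx => rw [map_smul, smul_eq_mul, map_mul, mul_smul, ← hx, Algebra.smul_def, mul_smul]

variable (k G V) in
def invariants : Submodule (MonoidAlgebra k G) V where
  carrier := {v | ∀ g, of k G g • v = v}
  add_mem' hv hw g := by rw [smul_add, hv g, hw g]
  zero_mem' g := smul_zero _
  smul_mem' x v hv g := by
    rw [smul_eq_counit_smul_of_forall_of_smul_eq hv, smul_smul, ← Algebra.commutes, mul_smul, hv]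

end Invariants

variable {k G : Type*} [CommRing k] [Group G] {p : ℕ} [Fact p.Prime] [CharP k p] [Finite G]

theorem of_smul_eq_self_of_isSimpleModule (hG : IsPGroup p G) {V : Type*} [AddCommGroup V]
    [Module (MonoidAlgebra k G) V] [IsSimpleModule (MonoidAlgebra k G) V] (g : G) (v : V) :
    of k G g • v = v := by
  let _ : DistribMulAction G V := DistribMulAction.compHom V (of k G)
  have hV : ∀ v : V, p • v = 0 := fun v => by
    rw [← Nat.cast_smul_eq_nsmul (MonoidAlgebra k G), ← map_natCast (algebraMap k _),
      CharP.cast_eq_zero, map_zero, zero_smul]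
  have : Nontrivial V := IsSimpleModule.nontrivial (MonoidAlgebra k G) V
  obtain ⟨v₀, hv₀, hfix⟩ := hG.exists_fixed_ne_zero hV
  have hinv : v₀ ∈ invariants k G V := hfix
  have htop : invariants k G V = ⊤ :=
    (eq_bot_or_eq_top _).resolve_left fun h => hv₀ ((Submodule.mem_bot _).1 (h ▸ hinv))
  exact (htop ▸ Submodule.mem_top : v ∈ invariants k G V) g

theorem ker_counit_le_jacobson (hG : IsPGroup p G) :
    RingHom.ker (Bialgebra.counitAlgHom k (MonoidAlgebra k G)) ≤
      Ring.jacobson (MonoidAlgebra k G) := by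
  rw [Ring.jacobson_eq_sInf_isMaximal]
  refine le_sInf fun m hm x hx => ?_
  have : IsSimpleModule _ (_ ⧸ m) := isSimpleModule_iff_isCoatom.2 (Ideal.isMaximal_def.1 hm)
  have h := smul_eq_counit_smul_of_forall_of_smul_eq
    (fun g => of_smul_eq_self_of_isSimpleModule hG g (Submodule.Quotient.mk 1 : _ ⧸ m)) x
  rwa [← Bialgebra.counitAlgHom_apply, RingHom.mem_ker.1 hx, map_zero, zero_smul,
    ← Submodule.Quotient.mk_smul, smul_eq_mul, mul_one, Submodule.Quotient.mk_eq_zero] at h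

end MonoidAlgebra

namespace HHPaper

open MonoidAlgebra

theorem IsDerivation.map_one {k A : Type*} [CommRing k] [Ring A] [Algebra k A]
    {f : Module.End k A} (hf : IsDerivation f) : f 1 = 0 := by
  simpa using hf 1 1

theorem commSubgroupE_le_ker {P E A : Type*} [Group P] [Group E] [CommGroup A]
    (φ : E →* MulAut P) (χ : P →* A) (hχ : ∀ e u, χ (φ e u) = χ u) :
    commSubgroupE φ ≤ χ.ker :=
  (Subgroup.closure_le _).2 <| by rintro _ ⟨e, u, rfl⟩; simp [hχ]

section

variable {k G : Type*} [CommRing k] [Group G] {f : Module.End k (MonoidAlgebra k G)}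

noncomputable def IsDerivation.counitHom (hf : IsDerivation f) : G →* Multiplicative k where
  toFun g := Multiplicative.ofAdd (Coalgebra.counit (f (of k G g)))
  map_one' := by rw [MonoidHom.map_one, hf.map_one, map_zero, ofAdd_zero]
  map_mul' g h := by
    rw [map_mul, hf, map_add, Bialgebra.counit_mul, Bialgebra.counit_mul, ofAdd_add]
    simp

theorem IsDerivation.counitHom_apply_map {E : Type*} [Group E] {φ : E →* MulAut G}
    (hf : IsDerivation f) (hstable : IsEStable k φ f) (e : E) (g : G) :
    hf.counitHom (φ e g) = hf.counitHom g := by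
  have h : of k G (φ e g) = domCongr k k (φ e) (of k G g) := by simp [domCongr_single]
  simp only [IsDerivation.counitHom, MonoidHom.coe_mk, OneHom.coe_mk]
  rw [h, hstable, counit_domCongr]

end

theorem stmt0_general (k : Type*) [Field k] (p : ℕ) [Fact p.Prime] [CharP k p]
    (P : Type*) [Group P] [Fintype P] (hP : IsPGroup p P)
    (E : Type*) [Group E]
    (φ : E →* MulAut P) (hPE : commSubgroupE φ = ⊤)
    (f : Module.End k (MonoidAlgebra k P))
    (hf : IsDerivation f) (hstable : IsEStable k φ f) :
    LinearMap.range f ≤ jacRad k (MonoidAlgebra k P) := by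
  have hχ (g : P) : hf.counitHom g = 1 := commSubgroupE_le_ker φ hf.counitHom
    (hf.counitHom_apply_map hstable) (hPE ▸ Subgroup.mem_top g)
  have hεf : (Bialgebra.counitAlgHom k _).toLinearMap ∘ₗ f = 0 :=
    lhom_ext' fun g => LinearMap.ext_ring (by simpa [IsDerivation.counitHom] using hχ g)
  rintro _ ⟨a, rfl⟩
  rw [jacRad, Submodule.restrictScalars_mem, Ideal.jacobson_bot]
  exact ker_counit_le_jacobson hP (LinearMap.congr_fun hεf a)

/-- Let `k` be a field of prime characteristic `p`, `P` a finite `p`-group,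
and `E` a finite group of order prime to `p` acting on `P` by automorphisms with `[P,E] = P`.
Then every `E`-stable derivation on `kP` has image contained in the Jacobson radical `J(kP)`. -/
theorem stmt0 (k : Type*) [Field k] (p : ℕ) [Fact p.Prime] [CharP k p]
    (P : Type*) [Group P] [Fintype P] (hP : IsPGroup p P)
    (E : Type*) [Group E] [Fintype E] (hE : ¬ p ∣ Fintype.card E)
    (φ : E →* MulAut P) (hPE : commSubgroupE φ = ⊤)
    (f : Module.End k (MonoidAlgebra k P))
    (hf : IsDerivation f) (hstable : IsEStable k φ f) :
    LinearMap.range f ≤ jacRad k (MonoidAlgebra k P) :=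
  stmt0_general k p P hP E φ hPE f hf hstable

end HHPaper
end

section
/- Let k be a field of prime characteristic p, let P be a finite p-group, and let α be an automorphism of P with no nontrivial fixed point (α(u) = u implies u = 1). Then the action of P on the set P given by u • x = u x α(u)⁻¹ is transitive, and consequently the kP-module (kP)_α obtained by k-linearly extending this action is projective (indeed free of rank 1, isomorphic to kP). -/
/-! Since `α` is fixed-point-free, `u ↦ u α(u)⁻¹` is injective, hence bijective on the finite
group `P`. It carries left multiplication to the twisted action, because
`g u α(g u)⁻¹ = g (u α(u)⁻¹) α(g)⁻¹`, so the twisted action is the regular action in disguise: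
it is transitive, and `r ↦ r • 1` is an isomorphism `kP ≅ (kP)_α` of `kP`-modules. -/

namespace HHPaper

open MonoidAlgebra

attribute [local instance] LieRing.ofAssociativeRing

section Twist

variable (k : Type*) [CommRing k] {P : Type*} [Group P]

/-- The representation of `P` on `kP` in which `u` acts on a basis element `x` by
`u • x = u x α(u)⁻¹`, for an automorphism `α` of `P`. -/
noncomputable def twistRep (α : MulAut P) : Representation k P (MonoidAlgebra k P) where
  toFun u := LinearMap.mulRight k (MonoidAlgebra.single ((α u)⁻¹) (1 : k)) ∘ₗ
      LinearMap.mulLeft k (MonoidAlgebra.single u (1 : k))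
  map_one' := by
    ext x
    simp [MonoidAlgebra.one_def]
  map_mul' u v := LinearMap.ext fun x => by
    simp only [LinearMap.coe_comp, Function.comp_apply, LinearMap.mulLeft_apply,
      LinearMap.mulRight_apply, Module.End.mul_apply, map_mul, mul_inv_rev]
    rw [show (MonoidAlgebra.single (u * v) (1 : k)) =
          MonoidAlgebra.single u 1 * MonoidAlgebra.single v 1 from by
        simp [MonoidAlgebra.single_mul_single],
      show (MonoidAlgebra.single ((α v)⁻¹ * (α u)⁻¹) (1 : k)) =
          MonoidAlgebra.single ((α v)⁻¹) 1 * MonoidAlgebra.single ((α u)⁻¹) 1 from by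
        simp [MonoidAlgebra.single_mul_single]]
    simp only [mul_assoc]

@[simp] lemma twistRep_apply (α : MulAut P) (u : P) (x : MonoidAlgebra k P) :
    twistRep k α u x = MonoidAlgebra.single u (1 : k) * x *
      MonoidAlgebra.single ((α u)⁻¹) (1 : k) := rfl

end Twist

open MonoidHom (FixedPointFree commutatorMap commutatorMap_apply)

section CommutatorMap

variable {G F : Type*} [Group G] [FunLike F G G] [MonoidHomClass F G G]

lemma commutatorMap_mul (φ : F) (g u : G) :
    commutatorMap φ (g * u) = g * commutatorMap φ u * (φ g)⁻¹ := by
  simp only [commutatorMap_apply, map_mul, div_eq_mul_inv, mul_inv_rev, mul_assoc]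

lemma exists_mul_mul_inv_eq_of_surjective {φ : F} (hφ : Function.Surjective (commutatorMap φ))
    (x y : G) : ∃ u, u * x * (φ u)⁻¹ = y := by
  obtain ⟨a, rfl⟩ := hφ x
  obtain ⟨b, rfl⟩ := hφ y
  refine ⟨b * a⁻¹, ?_⟩
  rw [← commutatorMap_mul, inv_mul_cancel_right]

end CommutatorMap

lemma bijective_mapDomainLinearMap {R S M N : Type*} [Semiring R] [Semiring S]
    [Module R S] {f : M → N} (hf : Function.Bijective f) :
    Function.Bijective (mapDomainLinearMap R S f) := by
  convert (mapDomainLinearEquiv R S (Equiv.ofBijective f hf)).bijective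
  ext x : 1
  apply coeff_injective
  simp [Finsupp.equivMapDomain_eq_mapDomain]

section TwistRep

variable {k : Type*} [CommRing k] {P : Type*} [Group P] (α : MulAut P)

lemma twistRep_single (u x : P) (c : k) :
    twistRep k α u (single x c) = single (u * x * (α u)⁻¹) c := by
  simp [single_mul_single]

lemma twistRep_asModuleEquiv_smul_single_one (r : MonoidAlgebra k P) :
    (twistRep k α).asModuleEquiv (r • (twistRep k α).asModuleEquiv.symm (single 1 1)) =
      mapDomainLinearMap k k (commutatorMap α) r := by
  induction r using MonoidAlgebra.induction_linear with
  | zero => simp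
  | add r s hr hs => simp only [add_smul, map_add, hr, hs]
  | single u c =>
    rw [Representation.single_smul]
    simp only [LinearEquiv.apply_symm_apply, twistRep_single, mapDomainLinearMap_single,
      commutatorMap_apply, mul_one, div_eq_mul_inv]
    exact (smul_single' c _ 1).trans (by rw [mul_one])

lemma bijective_toSpanSingleton_twistRep
    (hα : Function.Bijective (commutatorMap α)) :
    Function.Bijective (LinearMap.toSpanSingleton (MonoidAlgebra k P) (twistRep k α).asModule
      ((twistRep k α).asModuleEquiv.symm (single 1 1))) := by
  rw [← (twistRep k α).asModuleEquiv.bijective.of_comp_iff']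
  convert bijective_mapDomainLinearMap (R := k) (S := k) hα using 1
  exact funext (twistRep_asModuleEquiv_smul_single_one α)

end TwistRep

theorem stmt15_general (k : Type*) [Field k]
    (P : Type*) [Group P] [Fintype P]
    (α : MulAut P) (hα : ∀ u : P, α u = u → u = 1) :
    (∀ x y : P, ∃ u : P, u * x * (α u)⁻¹ = y) ∧
    Module.Projective (MonoidAlgebra k P) (twistRep k α).asModule ∧
    Nonempty ((twistRep k α).asModule ≃ₗ[MonoidAlgebra k P] MonoidAlgebra k P) := by
  have hfree : FixedPointFree α := hα
  have hbij : Function.Bijective (commutatorMap α) :=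
    ⟨hfree.commutatorMap_injective, hfree.commutatorMap_surjective⟩
  let Φ := LinearEquiv.ofBijective _ (bijective_toSpanSingleton_twistRep (k := k) α hbij)
  exact ⟨exists_mul_mul_inv_eq_of_surjective hbij.2, .of_equiv Φ, ⟨Φ.symm⟩⟩

/-- If `α` is a fixed-point-free automorphism of a finite `p`-group `P`,
then the action `u • x = u x α(u)⁻¹` of `P` on `P` is transitive, and consequently the
`kP`-module `(kP)_α` obtained from this action is projective, indeed free of rank one. -/
theorem stmt15 (k : Type*) [Field k] (p : ℕ) [Fact p.Prime] [CharP k p]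
    (P : Type*) [Group P] [Fintype P] (hP : IsPGroup p P)
    (α : MulAut P) (hα : ∀ u : P, α u = u → u = 1) :
    (∀ x y : P, ∃ u : P, u * x * (α u)⁻¹ = y) ∧
    Module.Projective (MonoidAlgebra k P) (twistRep k α).asModule ∧
    Nonempty ((twistRep k α).asModule ≃ₗ[MonoidAlgebra k P] MonoidAlgebra k P) :=
  stmt15_general k P α hα

end HHPaper
end
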